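/- In the sᵢ-stable case, the maps ∂ᵢ : H_C^{∗−sᵢ} → H_C^{∗sᵢ} and f ↦ (xᵢ − x_{i+1})·f/2 : H_C^{∗sᵢ} → H_C^{∗−sᵢ} are mutually inverse bijections, where H_C^{∗−sᵢ} = {f ∈ H_C : f ∗ sᵢ = −f}. -/

import Mathlib

open MvPolynomial

/-- The ring `H = Fun(Sₙ, ℂ[t₁,…,tₙ])`, with pointwise operations. -/
abbrev Hr (n : ℕ) := Equiv.Perm (Fin n) → MvPolynomial (Fin n) ℂ

/-- The element `xᵢ ∈ H`, given by `v ↦ t_{v(i)}`. -/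
noncomputable def xH {n : ℕ} (i : Fin n) : Hr n := fun v => X (v i)

/-- The element `tᵢ ∈ H`, the constant function `v ↦ tᵢ`. -/
noncomputable def tH {n : ℕ} (i : Fin n) : Hr n := fun _ => X i

/-- The right star action on `H`: `(g ∗ w)(v) = g(v w⁻¹)`. -/
noncomputable def starH {n : ℕ} (g : Hr n) (w : Equiv.Perm (Fin n)) : Hr n :=
  fun v => g (v * w⁻¹)

/-- The left dot action on `H`:
`(w · g)(v; t₁,…,tₙ) = g(w⁻¹ v; t_{w(1)},…,t_{w(n)})`. -/
noncomputable def dotH {n : ℕ} (w : Equiv.Perm (Fin n)) (g : Hr n) : Hr n :=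
  fun v => rename (⇑w) (g (w⁻¹ * v))


/-- `f` satisfies the divisibility condition `τ` for a transposition `τ = (j ↔ k)`:
`f − f∗τ` is a multiple of `xⱼ − xₖ` in `H` (i.e. pointwise, with quotients in
`ℂ[t₁,…,tₙ]`). -/
def condP {n : ℕ} (τ : Equiv.Perm (Fin n)) (f : Hr n) : Prop :=
  ∀ j k : Fin n, τ = Equiv.swap j k → (xH j - xH k) ∣ (f - starH f τ)

/-- The subring `H_C` of elements satisfying all conditions in a set `C` of
transpositions. -/
def HCset {n : ℕ} (C : Set (Equiv.Perm (Fin n))) : Set (Hr n) :=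
  {f | ∀ τ ∈ C, condP τ f}

/-! For `f ∈ H_C` with `f ∗ s = -f`, the condition for `s = (a b)` itself provides `g` with
`2 f = f - f ∗ s = (xₐ - x_b) g`. Applying `∗ s`, which negates `xₐ - x_b`, shows `g ∗ s = g`,
since `xₐ - x_b` is a non-zero-divisor. For another transposition `(j k) ∈ C`, the condition on
`2 f` gives `xⱼ - xₖ ∣ (xₐ - x_b)(g - g ∗ (j k))`, and pointwise `X_{v j} - X_{v k}` is coprime
to `X_{v a} - X_{v b}`: substituting `X_{v j} ↦ X_{v k}` kills the first but not the second. So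
`g ∈ H_C`. Conversely, `(xₐ - x_b) f / 2 ∈ H_C` because `H_C` is a subalgebra containing every
`xᵢ`, and cancelling `xₐ - x_b` gives that the two maps are mutually inverse. -/

namespace MvPolynomial

variable {σ R : Type*} [CommRing R] [DecidableEq σ]

theorem X_sub_X_dvd_sub_rename_update (j k : σ) (f : MvPolynomial σ R) :
    X j - X k ∣ f - rename (Function.update id j k) f := by
  set I := Ideal.span {(X j - X k : MvPolynomial σ R)}
  have hmk : (Ideal.Quotient.mkₐ R I).comp (rename (Function.update id j k)) =
      Ideal.Quotient.mkₐ R I := by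
    refine algHom_ext fun i => ?_
    rcases eq_or_ne i j with rfl | hij
    · simp only [AlgHom.comp_apply, rename_X, Function.update_self, Ideal.Quotient.mkₐ_eq_mk]
      rw [Ideal.Quotient.eq, Ideal.mem_span_singleton]
      exact Dvd.intro (-1) (by ring)
    · simp [Function.update_of_ne hij]
  rw [← Ideal.mem_span_singleton, ← Ideal.Quotient.eq]
  exact (congrArg (· f) hmk).symm

theorem X_sub_X_dvd_of_dvd_mul [IsDomain R] {p q j k : σ} {d : MvPolynomial σ R}
    (hpq : p ≠ q) (hne : s(p, q) ≠ s(j, k)) (h : X j - X k ∣ (X p - X q) * d) :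
    X j - X k ∣ d := by
  have hρ : Function.update id j k p ≠ Function.update id j k q := by
    intro hρ
    apply hne
    simp only [Function.update_apply, id] at hρ
    split_ifs at hρ <;> subst_vars <;> simp_all [Sym2.eq_swap]
  obtain ⟨e, he⟩ := h
  have hk : Function.update id j k k = k := by
    rcases eq_or_ne k j with rfl | hkj
    · exact Function.update_self ..
    · exact Function.update_of_ne hkj ..
  have hd : rename (Function.update id j k) d = 0 := by
    have := congrArg (rename (Function.update id j k)) he
    rw [map_mul, map_mul, map_sub, map_sub, rename_X, rename_X, rename_X, rename_X,
      Function.update_self, hk, sub_self, zero_mul] at this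
    exact (mul_eq_zero.1 this).resolve_left (sub_ne_zero.2 (X_injective.ne hρ))
  simpa [hd] using X_sub_X_dvd_sub_rename_update (R := R) j k d

end MvPolynomial

section StarAction

variable {n : ℕ}

lemma starH_sub (f g : Hr n) (w : Equiv.Perm (Fin n)) :
    starH (f - g) w = starH f w - starH g w := rfl

lemma starH_add (f g : Hr n) (w : Equiv.Perm (Fin n)) :
    starH (f + g) w = starH f w + starH g w := rfl

lemma starH_mul (f g : Hr n) (w : Equiv.Perm (Fin n)) :
    starH (f * g) w = starH f w * starH g w := rfl

lemma starH_smul (c : ℂ) (f : Hr n) (w : Equiv.Perm (Fin n)) :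
    starH (c • f) w = c • starH f w := rfl

lemma starH_algebraMap (c : ℂ) (w : Equiv.Perm (Fin n)) :
    starH (algebraMap ℂ (Hr n) c) w = algebraMap ℂ (Hr n) c := rfl

lemma starH_xH (i : Fin n) (w : Equiv.Perm (Fin n)) : starH (xH i) w = xH (w⁻¹ i) := rfl

lemma starH_starH (f : Hr n) (w w' : Equiv.Perm (Fin n)) :
    starH (starH f w) w' = starH f (w * w') := by
  funext v
  simp [starH, mul_assoc]

lemma starH_one (f : Hr n) : starH f 1 = f := by
  funext v
  simp [starH]

lemma starH_starH_swap (f : Hr n) (a b : Fin n) :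
    starH (starH f (Equiv.swap a b)) (Equiv.swap a b) = f := by
  rw [starH_starH, Equiv.swap_mul_self, starH_one]

lemma starH_xH_sub_xH_swap (a b : Fin n) :
    starH (xH a - xH b) (Equiv.swap a b) = -(xH a - xH b) := by
  rw [starH_sub, starH_xH, starH_xH, Equiv.swap_inv, Equiv.swap_apply_left,
    Equiv.swap_apply_right, neg_sub]

lemma isLeftRegular_xH_sub_xH {a b : Fin n} (hab : a ≠ b) : IsLeftRegular (xH a - xH b : Hr n) :=
  Pi.isLeftRegular_iff.2 fun v =>
    (IsRegular.of_ne_zero (sub_ne_zero.2 (X_injective.ne (v.injective.ne hab)) :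
      (X (v a) - X (v b) : MvPolynomial (Fin n) ℂ) ≠ 0)).left

lemma xH_sub_xH_dvd_of_dvd_mul {a b j k : Fin n} {d : Hr n} (hab : a ≠ b)
    (hjk : Equiv.swap j k ≠ Equiv.swap a b) (h : xH j - xH k ∣ (xH a - xH b) * d) :
    xH j - xH k ∣ d := by
  rw [pi_dvd_iff] at h ⊢
  refine fun v => X_sub_X_dvd_of_dvd_mul (v.injective.ne hab) ?_ (h v)
  rw [← Sym2.map_mk, ← Sym2.map_mk, (Sym2.map.injective v.injective).ne_iff, Ne,
    Sym2.eq_iff]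
  rintro (⟨rfl, rfl⟩ | ⟨rfl, rfl⟩)
  · exact hjk rfl
  · exact hjk (Equiv.swap_comm _ _)

lemma starH_swap_eq_of_sub_starH_eq_mul {a b : Fin n} {f g : Hr n} (hab : a ≠ b)
    (h : f - starH f (Equiv.swap a b) = (xH a - xH b) * g) :
    starH g (Equiv.swap a b) = g := by
  have h' := congrArg (starH · (Equiv.swap a b)) h
  rw [starH_sub, starH_mul, starH_starH_swap, starH_xH_sub_xH_swap] at h'
  exact isLeftRegular_xH_sub_xH hab (by linear_combination h' + h)

end StarAction

section Conditions

variable {n : ℕ} {τ : Equiv.Perm (Fin n)} {f g : Hr n}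

lemma condP_of_starH_eq (h : starH f τ = f) : condP τ f := by
  rintro j k rfl
  rw [h, sub_self]
  exact dvd_zero _

lemma condP.add (hf : condP τ f) (hg : condP τ g) : condP τ (f + g) := by
  rintro j k rfl
  rw [starH_add, add_sub_add_comm]
  exact dvd_add (hf j k rfl) (hg j k rfl)

lemma condP.sub (hf : condP τ f) (hg : condP τ g) : condP τ (f - g) := by
  rintro j k rfl
  rw [starH_sub, sub_sub_sub_comm]
  exact dvd_sub (hf j k rfl) (hg j k rfl)

lemma condP.mul (hf : condP τ f) (hg : condP τ g) : condP τ (f * g) := by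
  rintro j k rfl
  set w := Equiv.swap j k
  rw [starH_mul, show f * g - starH f w * starH g w =
    (f - starH f w) * g + starH f w * (g - starH g w) by ring]
  exact dvd_add (dvd_mul_of_dvd_left (hf j k rfl) _) (dvd_mul_of_dvd_right (hg j k rfl) _)

lemma condP_xH (τ : Equiv.Perm (Fin n)) (p : Fin n) : condP τ (xH p) := by
  rintro j k rfl
  rw [starH_xH, Equiv.swap_inv]
  rcases eq_or_ne p j with rfl | hpj
  · rw [Equiv.swap_apply_left]
  rcases eq_or_ne p k with rfl | hpk
  · rw [Equiv.swap_apply_right, ← neg_sub, neg_dvd]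
  · rw [Equiv.swap_apply_of_ne_of_ne hpj hpk, sub_self]
    exact dvd_zero _

lemma condP.of_xH_sub_xH_mul {a b : Fin n} (hab : a ≠ b) (hτ : τ ≠ Equiv.swap a b)
    (h : condP τ ((xH a - xH b) * g)) : condP τ g := by
  rintro j k rfl
  set w := Equiv.swap j k
  set c : Hr n := xH a - xH b
  have hc : xH j - xH k ∣ c - starH c w := (condP_xH w a).sub (condP_xH w b) j k rfl
  have hcg : xH j - xH k ∣ c * g - starH c w * starH g w := h j k rfl
  refine xH_sub_xH_dvd_of_dvd_mul hab hτ ?_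
  rw [show c * (g - starH g w) = (c * g - starH c w * starH g w) - (c - starH c w) * starH g w
    by ring]
  exact dvd_sub hcg (dvd_mul_of_dvd_left hc _)

def HC (C : Set (Equiv.Perm (Fin n))) : Subalgebra ℂ (Hr n) where
  carrier := HCset C
  mul_mem' hf hg τ hτ := (hf τ hτ).mul (hg τ hτ)
  add_mem' hf hg τ hτ := (hf τ hτ).add (hg τ hτ)
  algebraMap_mem' c τ _ := condP_of_starH_eq (starH_algebraMap c τ)

lemma xH_mem_HC (C : Set (Equiv.Perm (Fin n))) (p : Fin n) : xH p ∈ HC C :=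
  fun τ _ => condP_xH τ p

end Conditions

theorem eigenspace_bijection_general (n : ℕ) (a b : Fin n) (hab : (a : ℕ) + 1 = b)
    (C : Set (Equiv.Perm (Fin n)))
    (hs : Equiv.swap a b ∈ C) :
    (∀ f, f ∈ HCset C → starH f (Equiv.swap a b) = -f →
      ∃ g : Hr n, f - starH f (Equiv.swap a b) = (xH a - xH b) * g ∧
        (g ∈ HCset C ∧ starH g (Equiv.swap a b) = g) ∧
        (2⁻¹ : ℂ) • ((xH a - xH b) * g) = f) ∧
    (∀ f, f ∈ HCset C → starH f (Equiv.swap a b) = f →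
      ((2⁻¹ : ℂ) • ((xH a - xH b) * f) ∈ HCset C ∧
        starH ((2⁻¹ : ℂ) • ((xH a - xH b) * f)) (Equiv.swap a b)
          = -((2⁻¹ : ℂ) • ((xH a - xH b) * f))) ∧
      ∀ g : Hr n,
        (2⁻¹ : ℂ) • ((xH a - xH b) * f)
            - starH ((2⁻¹ : ℂ) • ((xH a - xH b) * f)) (Equiv.swap a b)
          = (xH a - xH b) * g → g = f) := by
  have hab' : a ≠ b := Fin.ne_of_val_ne (by omega)
  refine ⟨fun f hf hneg => ?_, fun f hf hfix => ?_⟩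
  · obtain ⟨g, hg⟩ := hf _ hs a b rfl
    have hgs := starH_swap_eq_of_sub_starH_eq_mul hab' hg
    have h2f : (xH a - xH b) * g = (2 : ℂ) • f := by rw [← hg, hneg, sub_neg_eq_add, two_smul]
    refine ⟨g, hg, ⟨fun τ hτ => ?_, hgs⟩, by rw [h2f, smul_smul]; norm_num⟩
    by_cases hτs : τ = Equiv.swap a b
    · exact hτs ▸ condP_of_starH_eq hgs
    · exact condP.of_xH_sub_xH_mul hab' hτs (h2f ▸ (HC C).smul_mem hf 2 τ hτ)
  · have hFs : starH ((2⁻¹ : ℂ) • ((xH a - xH b) * f)) (Equiv.swap a b) =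
        -((2⁻¹ : ℂ) • ((xH a - xH b) * f)) := by
      rw [starH_smul, starH_mul, starH_xH_sub_xH_swap, hfix, neg_mul, smul_neg]
    refine ⟨⟨(HC C).smul_mem ((HC C).mul_mem (sub_mem (xH_mem_HC C a) (xH_mem_HC C b)) hf) _,
      hFs⟩, fun g hg => isLeftRegular_xH_sub_xH hab' ?_⟩
    beta_reduce
    rw [← hg, hFs, sub_neg_eq_add, ← two_smul ℂ, smul_smul]
    norm_num

/-- in the `s`-stable case (`s = swap a b ∈ C`, `b = a + 1`,
`sCs = C`), the divided difference from the (-1)-eigenspace of `f ↦ f∗s` on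
`HCset C` to the (+1)-eigenspace, and the map `f ↦ (xH a - xH b) * f / 2` in the
other direction, are mutually inverse bijections. -/
theorem eigenspace_bijection (n : ℕ) (a b : Fin n) (hab : (a : ℕ) + 1 = b)
    (C : Set (Equiv.Perm (Fin n)))
    (hC : ∀ τ ∈ C, Equiv.Perm.IsSwap τ)
    (hs : Equiv.swap a b ∈ C)
    (hstab : ∀ τ, τ ∈ C ↔ Equiv.swap a b * τ * Equiv.swap a b ∈ C) :
    (∀ f, f ∈ HCset C → starH f (Equiv.swap a b) = -f →
      ∃ g : Hr n, f - starH f (Equiv.swap a b) = (xH a - xH b) * g ∧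
        (g ∈ HCset C ∧ starH g (Equiv.swap a b) = g) ∧
        (2⁻¹ : ℂ) • ((xH a - xH b) * g) = f) ∧
    (∀ f, f ∈ HCset C → starH f (Equiv.swap a b) = f →
      ((2⁻¹ : ℂ) • ((xH a - xH b) * f) ∈ HCset C ∧
        starH ((2⁻¹ : ℂ) • ((xH a - xH b) * f)) (Equiv.swap a b)
          = -((2⁻¹ : ℂ) • ((xH a - xH b) * f))) ∧
      ∀ g : Hr n,
        (2⁻¹ : ℂ) • ((xH a - xH b) * f)
            - starH ((2⁻¹ : ℂ) • ((xH a - xH b) * f)) (Equiv.swap a b)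
          = (xH a - xH b) * g → g = f) :=
  eigenspace_bijection_general n a b hab C hs
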